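/- Let n ≥ 2k²(k-1) with k ≥ 2, and let H be an induced subgraph of the Kneser graph KG(n,k) with at least (2k²(k-1)/n)·C(n,k) vertices. Then the free chromatic number of H satisfies φ(H) ≥ 2n - 2, and in particular φ(H) > 2χ(H). -/

import Mathlib

/-- The Kneser graph `KG(n,k)`: vertices are the `k`-subsets of an `n`-set,
two of them being adjacent iff they are disjoint. -/
def kneser (n k : ℕ) : SimpleGraph {A : Finset (Fin n) // A.card = k} where
  Adj A B := Disjoint A.1 B.1 ∧ A ≠ B
  symm := ⟨by rintro A B ⟨h, hne⟩; exact ⟨h.symm, hne.symm⟩⟩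
  loopless := ⟨by rintro A ⟨-, hne⟩; exact hne rfl⟩

/-- `S` is an independent set of `G`. -/
def IsIndep {V : Type*} (G : SimpleGraph V) (S : Set V) : Prop :=
  ∀ ⦃u⦄, u ∈ S → ∀ ⦃v⦄, v ∈ S → ¬ G.Adj u v

/-- A free independent set: an independent set contained in at least two
distinct maximal independent sets. -/
def FreeIndep {V : Type*} (G : SimpleGraph V) (F : Set V) : Prop :=
  IsIndep G F ∧ ∃ M₁ M₂ : Set V, M₁ ≠ M₂ ∧ F ⊆ M₁ ∧ F ⊆ M₂ ∧
    Maximal (IsIndep G) M₁ ∧ Maximal (IsIndep G) M₂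

/-- The free chromatic number `φ(G)`: the minimum number of parts in a partition of
`V(G)` into free independent sets (`⊤` if there is no such partition). -/
noncomputable def freeChrom (V : Type*) [Fintype V] [DecidableEq V]
    (G : SimpleGraph V) : ℕ∞ :=
  sInf {m : ℕ∞ | ∃ P : Finset (Finset V), (P.card : ℕ∞) = m ∧
    (∀ F ∈ P, FreeIndep G (F : Set V)) ∧
    (P : Set (Finset V)).PairwiseDisjoint id ∧ P.sup id = Finset.univ}

/-!
If `F` is a free independent set of `H`, two distinct maximal independent sets containing `F`
yield adjacent vertices `A`, `B` of `H` both non-adjacent to `F`: so `F` is an intersecting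
family of `k`-sets each meeting both of the disjoint `k`-sets `A` and `B`. Such a family has at
most `k * C(n-2, k-2)` members when `n ≥ 2k²(k-1)`. For a star with centre `x ∉ B` (say), count
the members through the pairs `{x, b}`, `b ∈ B`. Otherwise, a pair `{a, b} ∈ A × B` lying in more
than `k * C(n-3, k-3)` members meets every member, so any two such pairs meet. If two of them
share a point, `{a, b₁}` and `{a, b₂}`, then members avoiding `a` contain `b₁, b₂` and a point of
`A`, and members through `a` meet a fixed member avoiding `a`: both sets are small. Otherwise there
is at most one such pair, and counting members through all `k²` pairs of `A × B` suffices.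

As `k (k-1) C(n,k) = n (n-1) C(n-2, k-2)`, the hypothesis says
`|H| ≥ (2n - 2) * k * C(n-2, k-2)`, so a partition into free independent sets has at least
`2n - 2` parts, whereas colouring a `k`-set by its least element, capped at `n - 2k + 1`,
gives `χ(H) ≤ n - 2k + 2`.
-/

lemma Nat.add_two_mul_add_one_mul_choose_eq (n k : ℕ) :
    (n + 2) * (n + 1) * n.choose k = (n + 2).choose (k + 2) * (k + 2) * (k + 1) := by
  rw [mul_assoc, Nat.add_one_mul_choose_eq, ← mul_assoc, Nat.add_one_mul_choose_eq]

lemma Nat.mul_choose_le_choose_succ_succ {m n k : ℕ} (h : m * (k + 1) ≤ n + 1) :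
    m * n.choose k ≤ (n + 1).choose (k + 1) := by
  refine Nat.le_of_mul_le_mul_right ?_ k.succ_pos
  calc m * n.choose k * (k + 1) = m * (k + 1) * n.choose k := by ring
    _ ≤ (n + 1) * n.choose k := Nat.mul_le_mul_right _ h
    _ = (n + 1).choose (k + 1) * (k + 1) := Nat.add_one_mul_choose_eq n k

open Finset

namespace Finset

variable {α : Type*} [DecidableEq α] (𝒜 : Finset (Finset α))

lemma sum_le_add_card_mul_of_subsingleton {ι : Type*} {S : Finset ι} {g : ι → ℕ} {c m : ℕ}
    (hc : ∀ i ∈ S, g i ≤ c) (hm : ({i ∈ S | m < g i} : Set ι).Subsingleton) :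
    ∑ i ∈ S, g i ≤ c + #S * m := by
  classical
  by_cases hlarge : ∃ i ∈ S, m < g i
  · obtain ⟨i, hi, hgi⟩ := hlarge
    rw [← add_sum_erase S g hi]
    refine add_le_add (hc i hi) ((sum_le_card_nsmul _ _ m fun j hj ↦ ?_).trans ?_)
    · obtain ⟨hji, hj⟩ := mem_erase.1 hj
      exact not_lt.1 fun hgj ↦ hji (hm ⟨hj, hgj⟩ ⟨hi, hgi⟩)
    · rw [smul_eq_mul]
      exact Nat.mul_le_mul_right m card_erase_le
  · push Not at hlarge
    exact (sum_le_card_nsmul _ _ m hlarge).trans_eq (smul_eq_mul ..) |>.trans le_add_self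

lemma not_disjoint_pair_left_iff {a b : α} {C : Finset α} :
    ¬Disjoint {a, b} C ↔ a ∈ C ∨ b ∈ C := by
  rw [disjoint_insert_left, disjoint_singleton_left, not_and_or, not_not, not_not]

def codegree (s : Finset α) : ℕ := #{C ∈ 𝒜 | s ⊆ C}

@[simp]
lemma codegree_empty : codegree 𝒜 ∅ = #𝒜 := by
  simp [codegree]

lemma codegree_le_sum_codegree_insert {s E : Finset α} (hE : ∀ C ∈ 𝒜, ¬Disjoint C E) :
    codegree 𝒜 s ≤ ∑ w ∈ E, codegree 𝒜 (insert w s) := by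
  refine (card_le_card fun C hC ↦ ?_).trans card_biUnion_le
  obtain ⟨hC, hsC⟩ := mem_filter.1 hC
  obtain ⟨w, hwC, hwE⟩ := not_disjoint_iff.1 (hE C hC)
  exact mem_biUnion.2 ⟨w, hwE, mem_filter.2 ⟨hC, insert_subset hwC hsC⟩⟩

variable {𝒜} {k : ℕ}

lemma codegree_le_choose [Fintype α] (h𝒜 : (𝒜 : Set (Finset α)).Sized k) (s : Finset α) :
    codegree 𝒜 s ≤ (Fintype.card α - #s).choose (k - #s) := by
  calc codegree 𝒜 s ≤ #(powersetCard (k - #s) sᶜ) := by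
        refine card_le_card_of_injOn (· \ s) (fun C hC ↦ ?_) fun C hC D hD h ↦ ?_
        · obtain ⟨hC, hsC⟩ := mem_filter.1 hC
          rw [mem_coe, mem_powersetCard]
          exact ⟨fun x hx ↦ mem_compl.2 (mem_sdiff.1 hx).2, by rw [card_sdiff_of_subset hsC, h𝒜 hC]⟩
        · rw [← sdiff_union_of_subset (mem_filter.1 hC).2,
            ← sdiff_union_of_subset (mem_filter.1 hD).2]
          exact congrArg (· ∪ s) h
    _ = _ := by rw [card_powersetCard, card_compl]

lemma codegree_eq_zero_of_lt_card (h𝒜 : (𝒜 : Set (Finset α)).Sized k) {s : Finset α}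
    (hs : k < #s) : codegree 𝒜 s = 0 := by
  refine card_eq_zero.2 (filter_eq_empty_iff.2 fun C hC hsC ↦ ?_)
  have := card_le_card hsC
  rw [h𝒜 hC] at this
  omega

variable {c t : ℕ} {A B : Finset α}

lemma codegree_le_card_mul_of_forall_not_disjoint (ht : ∀ s, #s = 3 → codegree 𝒜 s ≤ t)
    {s E : Finset α} (hs : #s = 2) (hsE : Disjoint s E) (hE : ∀ C ∈ 𝒜, ¬Disjoint C E) :
    codegree 𝒜 s ≤ #E * t := by
  calc codegree 𝒜 s ≤ ∑ w ∈ E, codegree 𝒜 (insert w s) := codegree_le_sum_codegree_insert 𝒜 hE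
    _ ≤ ∑ _w ∈ E, t := sum_le_sum fun w hw ↦ ht _ <| by
        rw [card_insert_of_notMem (disjoint_right.1 hsE hw), hs]
    _ = #E * t := by rw [sum_const, smul_eq_mul]

lemma card_le_card_mul_of_forall_mem (hc : ∀ s, #s = 2 → codegree 𝒜 s ≤ c) {x : α} {E : Finset α}
    (hx : ∀ C ∈ 𝒜, x ∈ C) (hxE : x ∉ E) (hE : ∀ C ∈ 𝒜, ¬Disjoint C E) : #𝒜 ≤ #E * c := by
  have hdeg : codegree 𝒜 {x} = #𝒜 := by
    rw [codegree, filter_true_of_mem fun C hC ↦ singleton_subset_iff.2 (hx C hC)]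
  calc #𝒜 = codegree 𝒜 {x} := hdeg.symm
    _ ≤ ∑ w ∈ E, codegree 𝒜 (insert w {x}) := codegree_le_sum_codegree_insert 𝒜 hE
    _ ≤ ∑ _w ∈ E, c := sum_le_sum fun w hw ↦ hc _ <| card_pair fun h ↦ hxE (h ▸ hw)
    _ = #E * c := by rw [sum_const, smul_eq_mul]

lemma not_disjoint_of_mul_lt_codegree (h𝒜 : (𝒜 : Set (Finset α)).Sized k)
    (hint : (𝒜 : Set (Finset α)).Intersecting) (ht : ∀ s, #s = 3 → codegree 𝒜 s ≤ t)
    {s E : Finset α} (hs : #s = 2) (hheavy : k * t < codegree 𝒜 s) (hE : E ∈ 𝒜) :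
    ¬Disjoint s E := by
  intro hsE
  have := codegree_le_card_mul_of_forall_not_disjoint ht hs hsE fun C hC ↦ hint hC hE
  rw [h𝒜 hE] at this
  omega

lemma not_disjoint_of_mul_lt_codegree_of_mul_lt_codegree (hk : 2 ≤ k)
    (h𝒜 : (𝒜 : Set (Finset α)).Sized k) (hint : (𝒜 : Set (Finset α)).Intersecting)
    (ht : ∀ s, #s = 3 → codegree 𝒜 s ≤ t) {s s' : Finset α} (hs : #s = 2) (hs' : #s' = 2)
    (hheavy : k * t < codegree 𝒜 s) (hheavy' : k * t < codegree 𝒜 s') : ¬Disjoint s s' := by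
  intro hss'
  have hcover : ∀ C ∈ 𝒜, ¬Disjoint C s' := fun C hC h ↦
    not_disjoint_of_mul_lt_codegree h𝒜 hint ht hs' hheavy' hC h.symm
  have := codegree_le_card_mul_of_forall_not_disjoint ht hs hss' hcover
  rw [hs'] at this
  nlinarith

lemma card_le_mul_of_forall_mem_or_mem (h𝒜 : (𝒜 : Set (Finset α)).Sized k)
    (hint : (𝒜 : Set (Finset α)).Intersecting) (hA : #A = k) (hB : #B = k) (hAB : Disjoint A B)
    (hmA : ∀ C ∈ 𝒜, ¬Disjoint C A) (hmB : ∀ C ∈ 𝒜, ¬Disjoint C B)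
    (hc : ∀ s, #s = 2 → codegree 𝒜 s ≤ c) (ht : ∀ s, #s = 3 → codegree 𝒜 s ≤ t)
    (hct : k * (k + 2) * t ≤ c) {a b₁ b₂ : α} (ha : a ∈ A) (hb₁ : b₁ ∈ B) (hb₂ : b₂ ∈ B)
    (hb : b₁ ≠ b₂) (h₁ : ∀ C ∈ 𝒜, a ∈ C ∨ b₁ ∈ C) (h₂ : ∀ C ∈ 𝒜, a ∈ C ∨ b₂ ∈ C)
    {D : Finset α} (hD : D ∈ 𝒜) (haD : a ∉ D) : #𝒜 ≤ k * c := by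
  have haB : a ∉ B := disjoint_left.1 hAB ha
  have hwithout : #{C ∈ 𝒜 | a ∉ C} ≤ k * t := by
    have hsub : {C ∈ 𝒜 | a ∉ C} ⊆ {C ∈ 𝒜 | {b₁, b₂} ⊆ C} := fun C hC ↦ by
      obtain ⟨hC, haC⟩ := mem_filter.1 hC
      exact mem_filter.2 ⟨hC, insert_subset ((h₁ C hC).resolve_left haC)
        (singleton_subset_iff.2 ((h₂ C hC).resolve_left haC))⟩
    refine (card_le_card hsub).trans ?_
    rw [← hA]
    exact codegree_le_card_mul_of_forall_not_disjoint ht (card_pair hb)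
      (disjoint_of_subset_left (insert_subset hb₁ (singleton_subset_iff.2 hb₂)) hAB.symm) hmA
  have hDB : #{w ∈ D | w ∈ B} + 1 ≤ k := by
    obtain ⟨x, hxD, hxA⟩ := not_disjoint_iff.1 (hmA D hD)
    rw [← h𝒜 hD]
    exact card_lt_card (filter_ssubset.2 ⟨x, hxD, disjoint_left.1 hAB hxA⟩)
  have hwith : #{C ∈ 𝒜 | a ∈ C} ≤ #{w ∈ D | w ∈ B} * c + k * (k * t) := by
    have hpair : ∀ w ∈ D, #({w, a} : Finset α) = 2 := fun w hw ↦ card_pair fun h ↦ haD (h ▸ hw)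
    calc #{C ∈ 𝒜 | a ∈ C} = codegree 𝒜 {a} := by simp only [codegree, singleton_subset_iff]
      _ ≤ ∑ w ∈ D, codegree 𝒜 {w, a} :=
          codegree_le_sum_codegree_insert 𝒜 fun C hC ↦ hint hC hD
      _ = ∑ w ∈ D with w ∈ B, codegree 𝒜 {w, a} + ∑ w ∈ D with w ∉ B, codegree 𝒜 {w, a} :=
          (sum_filter_add_sum_filter_not _ _ _).symm
      _ ≤ ∑ w ∈ D with w ∈ B, c + ∑ w ∈ D with w ∉ B, #B * t := by
          gcongr with w hw w hw
          · exact hc _ (hpair w (mem_filter.1 hw).1)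
          · obtain ⟨hwD, hwB⟩ := mem_filter.1 hw
            refine codegree_le_card_mul_of_forall_not_disjoint ht (hpair w hwD) ?_ hmB
            simp [hwB, haB]
      _ ≤ #{w ∈ D | w ∈ B} * c + k * (k * t) := by
          rw [sum_const, sum_const, smul_eq_mul, smul_eq_mul, hB]
          gcongr
          exact (card_filter_le _ _).trans (h𝒜 hD).le
  rw [← card_filter_add_card_filter_not (fun C ↦ a ∈ C)]
  nlinarith

lemma card_le_sum_codegree_pair (hmA : ∀ C ∈ 𝒜, ¬Disjoint C A) (hmB : ∀ C ∈ 𝒜, ¬Disjoint C B) :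
    #𝒜 ≤ ∑ p ∈ A ×ˢ B, codegree 𝒜 {p.1, p.2} := by
  calc #𝒜 = codegree 𝒜 ∅ := (codegree_empty 𝒜).symm
    _ ≤ ∑ a ∈ A, codegree 𝒜 {a} := codegree_le_sum_codegree_insert 𝒜 hmA
    _ ≤ ∑ a ∈ A, ∑ b ∈ B, codegree 𝒜 {b, a} :=
        sum_le_sum fun a _ ↦ codegree_le_sum_codegree_insert 𝒜 hmB
    _ = ∑ p ∈ A ×ˢ B, codegree 𝒜 {p.1, p.2} := by
        rw [sum_product]
        exact sum_congr rfl fun a _ ↦ sum_congr rfl fun b _ ↦ by rw [pair_comm]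

lemma card_le_mul_of_forall_exists_notMem (hk : 2 ≤ k) (h𝒜 : (𝒜 : Set (Finset α)).Sized k)
    (hint : (𝒜 : Set (Finset α)).Intersecting) (hA : #A = k) (hB : #B = k) (hAB : Disjoint A B)
    (hmA : ∀ C ∈ 𝒜, ¬Disjoint C A) (hmB : ∀ C ∈ 𝒜, ¬Disjoint C B)
    (hc : ∀ s, #s = 2 → codegree 𝒜 s ≤ c) (ht : ∀ s, #s = 3 → codegree 𝒜 s ≤ t)
    (hct : k * (k + 2) * t ≤ c) (hstar : ∀ x, ∃ D ∈ 𝒜, x ∉ D) : #𝒜 ≤ k * c := by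
  have hpair : ∀ p ∈ A ×ˢ B, #({p.1, p.2} : Finset α) = 2 := fun p hp ↦
    card_pair fun h ↦ disjoint_left.1 hAB (mem_product.1 hp).1 (h ▸ (mem_product.1 hp).2)
  have hcover {p} (hp : p ∈ A ×ˢ B) (hheavy : k * t < codegree 𝒜 {p.1, p.2}) :
      ∀ C ∈ 𝒜, p.1 ∈ C ∨ p.2 ∈ C := fun C hC ↦
    not_disjoint_pair_left_iff.1 (not_disjoint_of_mul_lt_codegree h𝒜 hint ht (hpair p hp) hheavy hC)
  by_cases htwo : ∃ p ∈ A ×ˢ B, ∃ q ∈ A ×ˢ B, p ≠ q ∧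
      k * t < codegree 𝒜 {p.1, p.2} ∧ k * t < codegree 𝒜 {q.1, q.2}
  · obtain ⟨p, hp, q, hq, hpq, hgp, hgq⟩ := htwo
    obtain ⟨hpA, hpB⟩ := mem_product.1 hp
    obtain ⟨hqA, hqB⟩ := mem_product.1 hq
    have hmeet := not_disjoint_pair_left_iff.1 <|
      not_disjoint_of_mul_lt_codegree_of_mul_lt_codegree hk h𝒜 hint ht
        (hpair p hp) (hpair q hq) hgp hgq
    have hshare : p.1 = q.1 ∨ p.2 = q.2 := by
      have hAB' := disjoint_left.1 hAB
      simp only [mem_insert, mem_singleton] at hmeet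
      grind
    rcases hshare with h | h
    · obtain ⟨D, hD, hpD⟩ := hstar p.1
      exact card_le_mul_of_forall_mem_or_mem h𝒜 hint hA hB hAB hmA hmB hc ht hct hpA hpB hqB
        (fun h' ↦ hpq (Prod.ext h h')) (hcover hp hgp) (h ▸ hcover hq hgq) hD hpD
    · obtain ⟨D, hD, hpD⟩ := hstar p.2
      exact card_le_mul_of_forall_mem_or_mem h𝒜 hint hB hA hAB.symm hmB hmA hc ht hct hpB hpA hqA
        (fun h' ↦ hpq (Prod.ext h' h)) (fun C hC ↦ (hcover hp hgp C hC).symm)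
        (fun C hC ↦ h ▸ (hcover hq hgq C hC).symm) hD hpD
  · push Not at htwo
    have hsum := sum_le_add_card_mul_of_subsingleton (m := k * t) (fun p hp ↦ hc _ (hpair p hp))
      fun p hp q hq ↦ by_contra fun hpq ↦ (htwo p hp.1 q hq.1 hpq hp.2).not_gt hq.2
    rw [card_product, hA, hB] at hsum
    nlinarith [card_le_sum_codegree_pair hmA hmB]

theorem card_le_mul_of_intersecting_of_not_disjoint (hk : 2 ≤ k)
    (h𝒜 : (𝒜 : Set (Finset α)).Sized k) (hint : (𝒜 : Set (Finset α)).Intersecting)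
    (hA : #A = k) (hB : #B = k) (hAB : Disjoint A B)
    (hmA : ∀ C ∈ 𝒜, ¬Disjoint C A) (hmB : ∀ C ∈ 𝒜, ¬Disjoint C B)
    (hc : ∀ s, #s = 2 → codegree 𝒜 s ≤ c) (ht : ∀ s, #s = 3 → codegree 𝒜 s ≤ t)
    (hct : k * (k + 2) * t ≤ c) : #𝒜 ≤ k * c := by
  by_cases hstar : ∃ x, ∀ C ∈ 𝒜, x ∈ C
  · obtain ⟨x, hx⟩ := hstar
    by_cases hxA : x ∈ A
    · rw [← hB]
      exact card_le_card_mul_of_forall_mem hc hx (disjoint_left.1 hAB hxA) hmB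
    · rw [← hA]
      exact card_le_card_mul_of_forall_mem hc hx hxA hmA
  · push Not at hstar
    exact card_le_mul_of_forall_exists_notMem hk h𝒜 hint hA hB hAB hmA hmB hc ht hct hstar

theorem card_le_mul_choose_of_intersecting_of_not_disjoint [Fintype α] (hk : 2 ≤ k)
    (hn : 2 * k ^ 2 * (k - 1) ≤ Fintype.card α)
    (h𝒜 : (𝒜 : Set (Finset α)).Sized k) (hint : (𝒜 : Set (Finset α)).Intersecting)
    (hA : #A = k) (hB : #B = k) (hAB : Disjoint A B)
    (hmA : ∀ C ∈ 𝒜, ¬Disjoint C A) (hmB : ∀ C ∈ 𝒜, ¬Disjoint C B) :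
    #𝒜 ≤ k * (Fintype.card α - 2).choose (k - 2) := by
  have hc (s : Finset α) (hs : #s = 2) := hs ▸ codegree_le_choose h𝒜 s
  obtain ⟨t, ht, hct⟩ : ∃ t, (∀ s, #s = 3 → codegree 𝒜 s ≤ t) ∧
      k * (k + 2) * t ≤ (Fintype.card α - 2).choose (k - 2) := by
    obtain rfl | hk3 := hk.eq_or_lt
    -- for `k = 2`, the truncated `(n - 3).choose (k - 3)` is `1`, too weak; use `t = 0` instead
    · exact ⟨0, fun s hs ↦ (codegree_eq_zero_of_lt_card h𝒜 (by omega)).le, by simp⟩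
    refine ⟨_, fun s hs ↦ hs ▸ codegree_le_choose h𝒜 s, ?_⟩
    obtain ⟨j, rfl⟩ : ∃ j, k = j + 3 := ⟨k - 3, by omega⟩
    replace hn : 2 * (j + 3) ^ 2 * (j + 2) ≤ Fintype.card α := by simpa using hn
    obtain ⟨e, he⟩ : ∃ e, Fintype.card α = e + 3 :=
      ⟨Fintype.card α - 3, by have : 3 ≤ Fintype.card α := le_trans (by nlinarith) hn; omega⟩
    rw [he] at hn ⊢
    show (j + 3) * (j + 5) * e.choose j ≤ (e + 1).choose (j + 1)
    refine Nat.mul_choose_le_choose_succ_succ ?_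
    nlinarith
  exact card_le_mul_of_intersecting_of_not_disjoint hk h𝒜 hint hA hB hAB hmA hmB hc ht hct

end Finset

section FreeIndep

variable {V : Type*} {G : SimpleGraph V}

lemma exists_adj_of_maximal_isIndep_of_ne {M₁ M₂ : Set V} (h₁ : Maximal (IsIndep G) M₁)
    (h₂ : Maximal (IsIndep G) M₂) (hne : M₁ ≠ M₂) : ∃ a ∈ M₁, ∃ b ∈ M₂, G.Adj a b := by
  obtain ⟨a, ha₁, ha₂⟩ : ∃ a ∈ M₁, a ∉ M₂ :=
    Set.not_subset.1 fun h ↦ hne (h.antisymm (h₁.2 h₂.1 h))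
  by_contra! hno
  refine ha₂ (h₂.2 (y := insert a M₂) ?_ (Set.subset_insert _ _) (Set.mem_insert _ _))
  rintro u (rfl | hu) v (rfl | hv)
  · exact G.loopless.irrefl _
  · exact hno u ha₁ v hv
  · exact fun h ↦ hno v ha₁ u hu h.symm
  · exact h₂.1 hu hv

lemma FreeIndep.exists_adj {F : Set V} (hF : FreeIndep G F) :
    ∃ a b, G.Adj a b ∧ (∀ v ∈ F, ¬G.Adj v a) ∧ ∀ v ∈ F, ¬G.Adj v b := by
  obtain ⟨-, M₁, M₂, hne, hF₁, hF₂, h₁, h₂⟩ := hF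
  obtain ⟨a, ha, b, hb, hab⟩ := exists_adj_of_maximal_isIndep_of_ne h₁ h₂ hne
  exact ⟨a, b, hab, fun v hv ↦ h₁.1 (hF₁ hv) ha, fun v hv ↦ h₂.1 (hF₂ hv) hb⟩

lemma le_freeChrom_of_forall_card_le [Fintype V] [DecidableEq V] {m r : ℕ} (hm : 0 < m)
    (h : ∀ F : Finset V, FreeIndep G F → #F ≤ m) (hr : r * m ≤ Fintype.card V) :
    (r : ℕ∞) ≤ freeChrom V G := by
  refine le_sInf ?_
  rintro _ ⟨P, rfl, hfree, -, hcover⟩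
  refine Nat.cast_le.2 (Nat.le_of_mul_le_mul_right ?_ hm)
  calc r * m ≤ #(P.sup id) := by rwa [hcover, card_univ]
    _ ≤ ∑ F ∈ P, #F := by rw [sup_eq_biUnion]; exact card_biUnion_le
    _ ≤ #P * m := by simpa using sum_le_card_nsmul P card m fun F hF ↦ h F (hfree F hF)

end FreeIndep

lemma kneser_colorable {n k : ℕ} (hk : k ≠ 0) : (kneser n k).Colorable (n - 2 * k + 2) := by
  have hne (A : {A : Finset (Fin n) // #A = k}) : A.1.Nonempty :=
    card_pos.1 (by rw [A.2]; omega)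
  refine ⟨SimpleGraph.Coloring.mk
    (fun A ↦ ⟨min (A.1.min' (hne A)) (n - 2 * k + 1), by omega⟩) fun {A B} hAB hcol ↦ ?_⟩
  have hcol' := congrArg Fin.val hcol
  simp only at hcol'
  by_cases hA : (A.1.min' (hne A) : ℕ) < n - 2 * k + 1
  · have hmin : A.1.min' (hne A) = B.1.min' (hne B) := Fin.ext (by omega)
    exact disjoint_left.1 hAB.1 (A.1.min'_mem _) (hmin ▸ B.1.min'_mem _)
  · have hB : n - 2 * k + 1 ≤ (B.1.min' (hne B) : ℕ) := by omega
    have hsub : (A.1 ∪ B.1).image Fin.val ⊆ Ico (n - 2 * k + 1) n := by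
      intro x hx
      obtain ⟨y, hy, rfl⟩ := mem_image.1 hx
      refine mem_Ico.2 ⟨?_, y.isLt⟩
      rcases mem_union.1 hy with hy | hy
      · exact (not_lt.1 hA).trans (A.1.min'_le y hy)
      · exact hB.trans (B.1.min'_le y hy)
    have := card_le_card hsub
    rw [card_image_of_injective _ Fin.val_injective, card_union_of_disjoint hAB.1, A.2, B.2,
      Nat.card_Ico] at this
    omega

lemma not_disjoint_of_not_kneser_adj {n k : ℕ} (hk : k ≠ 0) {u v : {A : Finset (Fin n) // #A = k}}
    (h : ¬(kneser n k).Adj u v) : ¬Disjoint u.1 v.1 := by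
  intro huv
  obtain rfl | hne := eq_or_ne u v
  · exact hk (u.2 ▸ card_eq_zero.2 (disjoint_self.1 huv))
  · exact h ⟨huv, hne⟩

lemma card_le_of_freeIndep_kneser_induce {n k : ℕ} (hk : 2 ≤ k) (hn : 2 * k ^ 2 * (k - 1) ≤ n)
    {s : Set {A : Finset (Fin n) // #A = k}} {F : Finset s}
    (hF : FreeIndep ((kneser n k).induce s) F) : #F ≤ k * (n - 2).choose (k - 2) := by
  obtain ⟨a, b, hab, ha, hb⟩ := hF.exists_adj
  have hk0 : k ≠ 0 := by omega
  let 𝒜 : Finset (Finset (Fin n)) := F.map ⟨fun v ↦ v.1.1, fun u v h ↦ Subtype.ext (Subtype.ext h)⟩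
  have hsized : (𝒜 : Set (Finset (Fin n))).Sized k := fun C hC ↦ by
    obtain ⟨v, -, rfl⟩ := mem_map.1 hC
    exact v.1.2
  have hint : (𝒜 : Set (Finset (Fin n))).Intersecting := fun C hC D hD ↦ by
    obtain ⟨u, hu, rfl⟩ := mem_map.1 hC
    obtain ⟨v, hv, rfl⟩ := mem_map.1 hD
    exact not_disjoint_of_not_kneser_adj hk0 (hF.1 hu hv)
  have hmeet {w : s} (hw : ∀ v ∈ F, ¬(kneser n k).Adj v.1 w.1) : ∀ C ∈ 𝒜, ¬Disjoint C w.1.1 :=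
    fun C hC ↦ by
      obtain ⟨v, hv, rfl⟩ := mem_map.1 hC
      exact not_disjoint_of_not_kneser_adj hk0 (hw v hv)
  simpa [𝒜, Fintype.card_fin] using card_le_mul_choose_of_intersecting_of_not_disjoint hk
    (by rwa [Fintype.card_fin]) hsized hint a.1.2 b.1.2 hab.1 (hmeet ha) (hmeet hb)

lemma two_mul_sq_mul_sub_one_div_mul_choose_eq {n k : ℕ} (hk : 2 ≤ k) (hn : 2 ≤ n) :
    (2 : ℝ) * k ^ 2 * (k - 1) / n * n.choose k =
      ((2 * n - 2) * (k * (n - 2).choose (k - 2)) : ℕ) := by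
  obtain ⟨j, rfl⟩ : ∃ j, k = j + 2 := ⟨k - 2, by omega⟩
  obtain ⟨m, rfl⟩ : ∃ m, n = m + 2 := ⟨n - 2, by omega⟩
  have h := congrArg (Nat.cast : ℕ → ℝ) (Nat.add_two_mul_add_one_mul_choose_eq m j)
  simp only [Nat.add_sub_cancel, show 2 * (m + 2) - 2 = 2 * (m + 1) by omega]
  push_cast at h ⊢
  field_simp
  linear_combination -h

theorem freeChrom_of_large_induced_subgraph (n k : ℕ) (hk : 2 ≤ k)
    (hn : 2 * k ^ 2 * (k - 1) ≤ n)
    (s : Finset {A : Finset (Fin n) // A.card = k})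
    (hcard : (2 : ℝ) * k ^ 2 * ((k : ℝ) - 1) / n * (n.choose k) ≤ s.card) :
    (2 * n - 2 : ℕ) ≤ freeChrom _ ((kneser n k).induce (s : Set _)) ∧
      2 * ((kneser n k).induce (s : Set _)).chromaticNumber <
        freeChrom _ ((kneser n k).induce (s : Set _)) := by
  have hkn : 2 * k ^ 2 ≤ n := le_trans (Nat.le_mul_of_pos_right _ (by omega)) hn
  have hkn' : 2 * k + 2 ≤ n := by nlinarith
  have hs : (2 * n - 2) * (k * (n - 2).choose (k - 2)) ≤ #s := by
    exact_mod_cast two_mul_sq_mul_sub_one_div_mul_choose_eq (n := n) hk (by omega) ▸ hcard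
  have hphi : ((2 * n - 2 : ℕ) : ℕ∞) ≤ freeChrom _ ((kneser n k).induce (s : Set _)) :=
    le_freeChrom_of_forall_card_le (mul_pos (by omega) (Nat.choose_pos (by omega)))
      (fun F hF ↦ card_le_of_freeIndep_kneser_induce hk hn hF) (by simpa using hs)
  have hchi : ((kneser n k).induce (s : Set _)).chromaticNumber ≤ (n - 2 * k + 2 : ℕ) :=
    ((kneser_colorable (by omega)).of_hom (SimpleGraph.Embedding.induce _).toHom).chromaticNumber_le
  refine ⟨hphi, lt_of_lt_of_le ?_ hphi⟩
  calc 2 * ((kneser n k).induce (s : Set _)).chromaticNumber ≤ 2 * ((n - 2 * k + 2 : ℕ) : ℕ∞) := by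
        gcongr
    _ < (2 * n - 2 : ℕ) := by norm_cast; omega
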